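/- arXiv:2506.12731 — 5 statements merged into one kernel-verified Lean document; each statement's English description precedes it below -/
import Mathlib

section
/- Let s, y ∈ ℝ^n be nonzero with sᵀy > 0, θ the angle between s and y (so sin θ ∈ [0,1)). Define α_R = (sᵀy)/((sᵀs)(1 − sin θ)). Then α_R ≥ α_BB2 = (yᵀy)/(sᵀy). -/
open scoped RealInnerProductSpace

theorem right_ge_bb2 (n : ℕ) (s y : EuclideanSpace ℝ (Fin n))
    (hs : s ≠ 0) (hy : y ≠ 0) (hsy : 0 < ⟪s, y⟫) :
    ⟪s, y⟫ / (⟪s, s⟫ * (1 - Real.sqrt (1 - (⟪s, y⟫ / (‖s‖ * ‖y‖)) ^ 2)))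
      ≥ ⟪y, y⟫ / ⟪s, y⟫ := by
  set p : ℝ := ⟪s, y⟫ with hp
  have ha : (0:ℝ) < ‖s‖ := norm_pos_iff.mpr hs
  have hb : (0:ℝ) < ‖y‖ := norm_pos_iff.mpr hy
  have hab : (0:ℝ) < ‖s‖ * ‖y‖ := mul_pos ha hb
  have hcs : p ≤ ‖s‖ * ‖y‖ := real_inner_le_norm s y
  set c : ℝ := p / (‖s‖ * ‖y‖) with hc
  have hc0 : 0 < c := div_pos hsy hab
  have hc1 : c ≤ 1 := (div_le_one hab).mpr hcs
  have hx0 : 0 ≤ 1 - c ^ 2 := by nlinarith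
  have hx1 : 1 - c ^ 2 < 1 := by nlinarith
  have hsin1 : Real.sqrt (1 - c ^ 2) < 1 :=
    (Real.sqrt_lt' one_pos).mpr (by nlinarith)
  have hsinge : 1 - c ^ 2 ≤ Real.sqrt (1 - c ^ 2) := by
    have h := Real.sqrt_le_sqrt (show (1 - c ^ 2) ^ 2 ≤ 1 - c ^ 2 by nlinarith)
    rwa [Real.sqrt_sq hx0] at h
  have hss : ⟪s, s⟫ = ‖s‖ ^ 2 := real_inner_self_eq_norm_sq s
  have hyy : ⟪y, y⟫ = ‖y‖ ^ 2 := real_inner_self_eq_norm_sq y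
  have hcp : c * (‖s‖ * ‖y‖) = p := div_mul_cancel₀ p (ne_of_gt hab)
  rw [hss, hyy, ge_iff_le, div_le_div_iff₀ hsy (mul_pos (by positivity) (by linarith))]
  nlinarith [sq_nonneg (‖s‖ * ‖y‖), mul_le_mul_of_nonneg_left hsinge (sq_nonneg (‖s‖ * ‖y‖))]
end

section
/- Let λ > 1 and p ∈ (1,2) be real. Define u(ε) = (1 − λ(p(ε+1) − ε)) / (ε(λ − p) − (p − 1)) and F(ε) = u(ε)² ε. Then the positive solutions ε of F(ε) = ε are exactly ε* = (p(λ+1) − 2)/(λ(2−p) − p), which is a valid (positive) fixed point if and only if λ > p/(2−p). -/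
theorem left_fixed_points (lam p : ℝ) (hlam : 1 < lam) (hp : p ∈ Set.Ioo (1 : ℝ) 2) :
    (∀ ε : ℝ, 0 < ε →
      (((1 - lam * (p * (ε + 1) - ε)) / (ε * (lam - p) - (p - 1))) ^ 2 * ε = ε ↔
        (lam > p / (2 - p) ∧ ε = (p * (lam + 1) - 2) / (lam * (2 - p) - p)))) ∧
    (0 < (p * (lam + 1) - 2) / (lam * (2 - p) - p) ↔ lam > p / (2 - p)) := by
  obtain ⟨hp1, hp2⟩ := hp
  have hApos : 0 < p * (lam + 1) - 2 := by nlinarith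
  have hBiff : (lam > p / (2 - p)) ↔ 0 < lam * (2 - p) - p := by
    rw [gt_iff_lt, div_lt_iff₀ (by linarith : (0:ℝ) < 2 - p)]
    constructor <;> intro h <;> nlinarith
  constructor
  · intro ε hε
    set N := 1 - lam * (p * (ε + 1) - ε) with hN
    set D := ε * (lam - p) - (p - 1) with hD
    have hNneg : N < 0 := by
      have : 0 < lam * (p - 1) * ε :=
        mul_pos (mul_pos (by linarith) (by linarith)) hε
      nlinarith
    have hsum : N + D = ε * (lam * (2 - p) - p) - (p * (lam + 1) - 2) := by
      rw [hN, hD]; ring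
    have hdiff : N - D = -(p * (lam - 1) * (1 + ε)) := by
      rw [hN, hD]; ring
    have hNDne : N ≠ D := by
      have : 0 < p * (lam - 1) * (1 + ε) :=
        mul_pos (mul_pos (by linarith) (by linarith)) (by linarith)
      intro h; rw [h] at hdiff; linarith
    constructor
    · intro h
      have hDne : D ≠ 0 := by
        intro h0
        rw [h0, div_zero] at h
        norm_num at h
        linarith
      have h1 : (N / D) ^ 2 = 1 := by
        have := mul_right_cancel₀ (ne_of_gt hε) (h.trans (one_mul ε).symm)
        exact this
      have h2 : N ^ 2 = D ^ 2 := by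
        have hD2 : D ^ 2 ≠ 0 := pow_ne_zero 2 hDne
        field_simp at h1
        exact h1
      have h3 : N + D = 0 := by
        have h4 : (N - D) * (N + D) = 0 := by nlinarith [h2]
        rcases mul_eq_zero.mp h4 with h5 | h5
        · exact absurd (by linarith : N = D) hNDne
        · exact h5
      have hkey : ε * (lam * (2 - p) - p) = p * (lam + 1) - 2 := by linarith
      have hBpos : 0 < lam * (2 - p) - p := by nlinarith
      refine ⟨hBiff.mpr hBpos, ?_⟩
      rw [eq_div_iff (ne_of_gt hBpos)]
      linarith [hkey]
    · rintro ⟨hgt, hεeq⟩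
      have hBpos : 0 < lam * (2 - p) - p := hBiff.mp hgt
      have hkey : ε * (lam * (2 - p) - p) = p * (lam + 1) - 2 := by
        rw [hεeq]; field_simp
      have hND : N = -D := by linarith
      have hDne : D ≠ 0 := by
        intro h0; rw [h0, neg_zero] at hND; linarith
      rw [hND, neg_div, div_self hDne]
      ring
  · rw [hBiff]
    rw [div_pos_iff]
    constructor
    · rintro (⟨_, h⟩ | ⟨h, _⟩)
      · exact h
      · linarith
    · intro h; exact Or.inl ⟨hApos, h⟩
end

section
/- Let λ > p/(2−p), p ∈ (1,2), and ε* = (p(λ+1)−2)/(λ(2−p)−p). Define g(ε) = u(ε)² with u(ε) = (1 − λ(p(ε+1)−ε))/(ε(λ−p)−(p−1)). Then q := −ε* g'(ε*) = 2(p(λ+1)−2)(λ(2−p)−p)/(p(λ−1)²), and q > 0. -/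
theorem left_stability_parameter (lam p : ℝ) (hp : p ∈ Set.Ioo (1 : ℝ) 2)
    (hlam : lam > p / (2 - p)) :
    let εstar : ℝ := (p * (lam + 1) - 2) / (lam * (2 - p) - p)
    let u : ℝ → ℝ := fun ε => (1 - lam * (p * (ε + 1) - ε)) / (ε * (lam - p) - (p - 1))
    (-εstar * deriv (fun ε => (u ε) ^ 2) εstar =
      2 * (p * (lam + 1) - 2) * (lam * (2 - p) - p) / (p * (lam - 1) ^ 2)) ∧
    0 < 2 * (p * (lam + 1) - 2) * (lam * (2 - p) - p) / (p * (lam - 1) ^ 2) := by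
  obtain ⟨hp1, hp2⟩ := hp
  have h2p : (0:ℝ) < 2 - p := by linarith
  have hB : 0 < lam * (2 - p) - p := by
    have h := (div_lt_iff₀ h2p).mp hlam
    nlinarith
  have hlam1 : 1 < lam := by
    have h1 : (1:ℝ) < p / (2 - p) := by
      rw [lt_div_iff₀ h2p]; linarith
    linarith
  have hA : 0 < p * (lam + 1) - 2 := by nlinarith
  have hp0 : (0:ℝ) < p := by linarith
  have hlamne : lam - 1 ≠ 0 := by intro h; linarith [sub_eq_zero.mp h]
  have hBne : lam * (2 - p) - p ≠ 0 := ne_of_gt hB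
  intro εstar u
  have hεdef : εstar = (p * (lam + 1) - 2) / (lam * (2 - p) - p) := rfl
  have hDval : εstar * (lam - p) - (p - 1) = p * (lam - 1) ^ 2 / (lam * (2 - p) - p) := by
    rw [hεdef]; field_simp; ring
  have hDpos : 0 < εstar * (lam - p) - (p - 1) := by
    rw [hDval]; positivity
  have hD : εstar * (lam - p) - (p - 1) ≠ 0 := ne_of_gt hDpos
  have hNval : 1 - lam * (p * (εstar + 1) - εstar) = -(p * (lam - 1) ^ 2) / (lam * (2 - p) - p) := by
    rw [hεdef]; field_simp; ring
  have h1 : HasDerivAt (fun ε : ℝ => 1 - lam * (p * (ε + 1) - ε)) (-(lam * (p - 1))) εstar := by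
    have h := ((((hasDerivAt_id εstar).add_const 1).const_mul p).sub
      (hasDerivAt_id εstar)).const_mul lam |>.const_sub 1
    exact h.congr_deriv (by ring)
  have h2 : HasDerivAt (fun ε : ℝ => ε * (lam - p) - (p - 1)) (lam - p) εstar := by
    have h := ((hasDerivAt_id εstar).mul_const (lam - p)).sub_const (p - 1)
    exact h.congr_deriv (by ring)
  have hu : HasDerivAt u ((-(lam * (p - 1)) * (εstar * (lam - p) - (p - 1)) -
      (1 - lam * (p * (εstar + 1) - εstar)) * (lam - p)) /
      (εstar * (lam - p) - (p - 1)) ^ 2) εstar := h1.div h2 hD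
  have huval : u εstar = -1 := by
    show (1 - lam * (p * (εstar + 1) - εstar)) / (εstar * (lam - p) - (p - 1)) = -1
    rw [hNval, hDval]
    field_simp
  have hu' : HasDerivAt u ((lam * (2 - p) - p) ^ 2 / (p * (lam - 1) ^ 2)) εstar := by
    convert hu using 1
    rw [hNval, hDval]
    field_simp
    ring
  have hsq : HasDerivAt (fun ε => (u ε) ^ 2)
      (2 * u εstar ^ 1 * ((lam * (2 - p) - p) ^ 2 / (p * (lam - 1) ^ 2))) εstar := hu'.pow 2
  constructor
  · rw [hsq.deriv, huval, hεdef]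
    field_simp
  · positivity
end

section
/- Let λ > 1 and p ∈ (1,2). Define v(ε) = (λ²ε(p−1) + p − λ)/(λε(pλ−1) + p − 1). Then the nonnegative solutions of v(ε)²ε = ε are ε = 0 and, provided λ > 2p−1, ε = (λ+1−2p)/(λ(λ(2p−1)−1)); the other root of v(ε)² = 1 is ε = −1/λ < 0. -/
theorem right_fixed_points (lam p : ℝ) (hlam : 1 < lam) (hp : p ∈ Set.Ioo (1 : ℝ) 2) :
    let v : ℝ → ℝ := fun ε =>
      (lam ^ 2 * ε * (p - 1) + p - lam) / (lam * ε * (p * lam - 1) + p - 1)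
    (∀ ε : ℝ, 0 ≤ ε →
      ((v ε) ^ 2 * ε = ε ↔
        ε = 0 ∨ (lam > 2 * p - 1 ∧ ε = (lam + 1 - 2 * p) / (lam * (lam * (2 * p - 1) - 1))))) ∧
    (v (-1 / lam)) ^ 2 = 1 ∧ (-1 / lam : ℝ) < 0 := by
  obtain ⟨hp1, hp2⟩ := hp
  intro v
  have hlam0 : (0:ℝ) < lam := by linarith
  have hc : 0 < lam * (2 * p - 1) - 1 := by nlinarith
  refine ⟨?_, ?_, ?_⟩
  · intro ε hε
    have hDε : 0 < lam * ε * (p * lam - 1) + p - 1 := by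
      have h0 : 0 ≤ lam * ε * (p * lam - 1) :=
        mul_nonneg (mul_nonneg hlam0.le hε) (by nlinarith)
      linarith
    have hDne : lam * ε * (p * lam - 1) + p - 1 ≠ 0 := ne_of_gt hDε
    constructor
    · intro h
      rcases eq_or_lt_of_le hε with h0 | hpos
      · exact Or.inl h0.symm
      right
      have h' : (lam ^ 2 * ε * (p - 1) + p - lam) ^ 2 * ε
          = ε * (lam * ε * (p * lam - 1) + p - 1) ^ 2 := by
        have := h
        simp only [v] at this
        field_simp at this
        rw [div_eq_one_iff_eq (by rw [show lam * p = p * lam by ring]; exact pow_ne_zero 2 hDne)] at this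
        rw [show lam * p = p * lam by ring] at this
        linear_combination ε * this
      have key : ε * (-(lam - 1) * (lam * ε + 1)) *
          (lam * ε * (lam * (2 * p - 1) - 1) - (lam + 1 - 2 * p)) = 0 := by
        linear_combination h'
      have h1 : ε * (-(lam - 1) * (lam * ε + 1)) ≠ 0 := by
        have : 0 < ε * ((lam - 1) * (lam * ε + 1)) :=
          mul_pos hpos (mul_pos (by linarith) (by nlinarith))
        intro hcon
        nlinarith
      have h2 : lam * ε * (lam * (2 * p - 1) - 1) - (lam + 1 - 2 * p) = 0 := by
        rcases mul_eq_zero.mp key with h | h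
        · exact absurd h h1
        · exact h
      have hlp : lam > 2 * p - 1 := by
        nlinarith [mul_pos (mul_pos hlam0 hpos) hc]
      refine ⟨hlp, ?_⟩
      rw [eq_div_iff (by positivity)]
      linarith [h2]
    · rintro (rfl | ⟨hlp, rfl⟩)
      · simp
      · have hlc : lam * (lam * (2 * p - 1) - 1) ≠ 0 := by positivity
        set ε := (lam + 1 - 2 * p) / (lam * (lam * (2 * p - 1) - 1)) with hεdef
        have hND : lam ^ 2 * ε * (p - 1) + p - lam
            = -(lam * ε * (p * lam - 1) + p - 1) := by
          rw [hεdef]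
          field_simp
          ring
        show ((lam ^ 2 * ε * (p - 1) + p - lam) / (lam * ε * (p * lam - 1) + p - 1)) ^ 2 * ε = ε
        rw [hND, neg_div, div_self hDne]
        ring
  · have hlne : lam ≠ 0 := ne_of_gt hlam0
    have hD : lam * (-1 / lam) * (p * lam - 1) + p - 1 = p * (1 - lam) := by
      field_simp
      ring
    have hDne : lam * (-1 / lam) * (p * lam - 1) + p - 1 ≠ 0 := by
      rw [hD]
      have : p * (1 - lam) < 0 := by nlinarith
      linarith
    have hN : lam ^ 2 * (-1 / lam) * (p - 1) + p - lam
        = lam * (-1 / lam) * (p * lam - 1) + p - 1 := by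
      field_simp
      ring
    show ((lam ^ 2 * (-1 / lam) * (p - 1) + p - lam) /
        (lam * (-1 / lam) * (p * lam - 1) + p - 1)) ^ 2 = 1
    rw [hN, div_self hDne]
    norm_num
  · have : (0:ℝ) < lam := hlam0
    simpa using div_neg_of_neg_of_pos (by norm_num : (-1:ℝ) < 0) this
end

section
/- For λ > 2 + √3, the inequality (λ+1−2p)(λ(2p−1)−1)/(p(λ−1)²) < 1/2 has no solution p ∈ (1,2). -/
theorem right_instability_for_large_lambda (lam : ℝ) (hlam : lam > 2 + Real.sqrt 3) :
    ¬ ∃ p ∈ Set.Ioo (1 : ℝ) 2,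
      (lam + 1 - 2 * p) * (lam * (2 * p - 1) - 1) / (p * (lam - 1) ^ 2) < 1 / 2 := by
  rintro ⟨p, ⟨hp1, hp2⟩, hlt⟩
  have hs3 : Real.sqrt 3 > 1 := by
    nlinarith [Real.sq_sqrt (by norm_num : (3:ℝ) ≥ 0), Real.sqrt_nonneg 3]
  have hlam3 : lam > 3 := by linarith
  have hkey : lam ^ 2 - 4 * lam + 1 > 0 := by
    have h : lam - 2 > Real.sqrt 3 := by linarith
    nlinarith [Real.sq_sqrt (by norm_num : (3:ℝ) ≥ 0), Real.sqrt_nonneg 3]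
  have hD : p * (lam - 1) ^ 2 > 0 := mul_pos (by linarith) (pow_pos (by linarith) 2)
  rw [div_lt_iff₀ hD] at hlt
  nlinarith [mul_nonneg (by linarith : (2:ℝ) - p ≥ 0) (sq_nonneg (lam - 1)),
    mul_nonneg (by linarith : p - 1 ≥ 0) hkey.le,
    mul_nonneg (mul_nonneg (by linarith : lam ≥ 0) (by linarith : p - 1 ≥ 0))
      (by linarith : (2:ℝ) - p ≥ 0)]
end
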